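/- arXiv:1007.4663 — 5 statements merged into one kernel-verified Lean document; each statement's English description precedes it below -/
import Mathlib

section
/- If a Langford pairing of order n exists, then n ≡ 0 or n ≡ 3 (mod 4). -/
/-- A Langford sequence of order `n` with multiplicity `m`: a sequence of length
`m * n` with values in `{1, ..., n}` such that for each value `v`, the positions
where `v` occurs are exactly `θ, θ + (v+1), ..., θ + (m-1)*(v+1)` for some `θ`
(so `v` occurs exactly `m` times, consecutive occurrences separated by exactly
`v` intermediate terms). -/
def IsLangford (m n : ℕ) (f : Fin (m * n) → ℕ) : Prop :=
  (∀ i, f i ∈ Finset.Icc 1 n) ∧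
    ∀ v ∈ Finset.Icc 1 n, ∃ θ : ℕ,
      ∀ i : Fin (m * n), f i = v ↔ ∃ t < m, (i : ℕ) = θ + t * (v + 1)

theorem gauss_icc_aux : ∀ m : ℕ, (∑ v ∈ Finset.Icc 1 m, v) * 2 = m * m + m := by
  intro m
  induction m with
  | zero => simp
  | succ k ih =>
    rw [Finset.sum_Icc_succ_top (by omega)]
    ring_nf
    ring_nf at ih
    omega

/-- If a Langford pairing of order `n` exists, then `n ≡ 0` or `3 (mod 4)`. -/
theorem langford_pairing_necessary_condition (n : ℕ)
    (h : ∃ f : Fin (2 * n) → ℕ, IsLangford 2 n f) :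
    n % 4 = 0 ∨ n % 4 = 3 := by
  obtain ⟨f, hmem, hval⟩ := h
  choose! θ hθ using hval
  set F : ℕ → Finset (Fin (2 * n)) :=
    fun v => Finset.univ.filter (fun i => f i = v) with hF
  have himg : ∀ v ∈ Finset.Icc 1 n,
      (F v).image (fun i : Fin (2 * n) => (i : ℕ)) ⊆ {θ v, θ v + (v + 1)} := by
    intro v hv x hx
    simp only [hF, Finset.mem_image, Finset.mem_filter, Finset.mem_univ, true_and] at hx
    obtain ⟨i, hi, rfl⟩ := hx
    obtain ⟨t, ht, hit⟩ := (hθ v hv i).mp hi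
    interval_cases t <;> simp [hit]
  have hcardimg : ∀ v, ((F v).image (fun i : Fin (2 * n) => (i : ℕ))).card = (F v).card :=
    fun v => Finset.card_image_of_injective _ Fin.val_injective
  have hcard_le : ∀ v ∈ Finset.Icc 1 n, (F v).card ≤ 2 := by
    intro v hv
    rw [← hcardimg v]
    refine (Finset.card_le_card (himg v hv)).trans ?_
    exact (Finset.card_insert_le _ _).trans (by simp)
  have hsum_card : ∑ v ∈ Finset.Icc 1 n, (F v).card = 2 * n := by
    have := Finset.card_eq_sum_card_fiberwise (f := f) (s := Finset.univ)
      (t := Finset.Icc 1 n) (fun i _ => hmem i)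
    simpa [hF] using this.symm
  have hcard : ∀ v ∈ Finset.Icc 1 n, (F v).card = 2 := by
    by_contra hc
    push_neg at hc
    obtain ⟨v0, hv0, hne⟩ := hc
    have hlt : ∑ v ∈ Finset.Icc 1 n, (F v).card < ∑ v ∈ Finset.Icc 1 n, 2 :=
      Finset.sum_lt_sum (fun v hv => hcard_le v hv)
        ⟨v0, hv0, lt_of_le_of_ne (hcard_le v0 hv0) hne⟩
    rw [hsum_card, Finset.sum_const, Nat.card_Icc, smul_eq_mul] at hlt
    omega
  have hsumF : ∀ v ∈ Finset.Icc 1 n, ∑ i ∈ F v, (i : ℕ) = 2 * θ v + (v + 1) := by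
    intro v hv
    have hv1 : 1 ≤ v := (Finset.mem_Icc.mp hv).1
    have hpairne : θ v ≠ θ v + (v + 1) := by omega
    have heq : (F v).image (fun i : Fin (2 * n) => (i : ℕ)) = {θ v, θ v + (v + 1)} := by
      refine Finset.eq_of_subset_of_card_le (himg v hv) ?_
      rw [hcardimg v, hcard v hv]
      exact (Finset.card_insert_le _ _).trans (by simp)
    have hsi := Finset.sum_image (s := F v) (f := fun x : ℕ => x)
      (g := fun i : Fin (2 * n) => (i : ℕ)) (fun a _ b _ hab => Fin.val_injective hab)
    rw [← hsi, heq, Finset.sum_pair hpairne]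
    ring
  have htotal : ∑ i : Fin (2 * n), (i : ℕ)
      = ∑ v ∈ Finset.Icc 1 n, (2 * θ v + (v + 1)) := by
    rw [← Finset.sum_fiberwise_of_maps_to (fun i (_ : i ∈ Finset.univ) => hmem i)
      (fun i : Fin (2 * n) => (i : ℕ))]
    exact Finset.sum_congr rfl (fun v hv => hsumF v hv)
  set T := ∑ v ∈ Finset.Icc 1 n, θ v with hT
  have hR : ∑ v ∈ Finset.Icc 1 n, (2 * θ v + (v + 1))
      = 2 * T + (∑ v ∈ Finset.Icc 1 n, v) + n := by
    rw [Finset.sum_add_distrib, Finset.sum_add_distrib, ← Finset.mul_sum]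
    simp [Nat.card_Icc, add_assoc, hT]
  have hGauss : (∑ v ∈ Finset.Icc 1 n, v) * 2 = n * n + n := gauss_icc_aux n
  have hL : (∑ i : Fin (2 * n), (i : ℕ)) * 2 + 2 * n = (2 * n) * (2 * n) := by
    rw [Fin.sum_univ_eq_sum_range (fun x => x) (2 * n), Finset.sum_range_id_mul_two]
    cases n with
    | zero => simp
    | succ k =>
      have h1 : 2 * (k + 1) - 1 = 2 * k + 1 := by omega
      rw [h1]; ring
  -- combine: 4*T + n*n + 5*n = 4*(n*n)
  have hkey : 4 * T + n * n + 5 * n = 4 * (n * n) := by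
    rw [htotal, hR] at hL
    nlinarith [hGauss, hL]
  have h0 : (4 : ZMod 4) = 0 := by decide
  have hz : (n : ZMod 4) * (n : ZMod 4) + (n : ZMod 4) = 0 := by
    have hc := congrArg (Nat.cast : ℕ → ZMod 4) hkey
    push_cast at hc
    linear_combination hc + ((n : ZMod 4) * (n : ZMod 4) - (n : ZMod 4) - (T : ZMod 4)) * h0
  have hcases : ∀ x : ZMod 4, x * x + x = 0 → x = 0 ∨ x = 3 := by decide
  have hv := ZMod.val_natCast (n := 4) n
  rcases hcases _ hz with hx | hx
  · left; rw [hx] at hv; simpa using hv.symm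
  · right; rw [hx] at hv; exact hv.symm.trans rfl
end

section
/- If m is a prime and a Langford sequence of order n with multiplicity m exists, then n mod m² lies in the set {m² − 1, 0, 1, 2, ..., m − 2}. -/
open Finset

/-- If `m` is prime and a Langford sequence of order `n` with multiplicity `m`
exists, then `n mod m ^ 2` lies in the set `{m ^ 2 - 1, 0, 1, ..., m - 2}`. -/
theorem langford_prime_multiplicity_necessary (m n : ℕ) (hm : m.Prime)
    (h : ∃ f : Fin (m * n) → ℕ, IsLangford m n f) :
    n % m ^ 2 = m ^ 2 - 1 ∨ n % m ^ 2 ≤ m - 2 := by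
  classical
  obtain ⟨f, hf1, hf2⟩ := h
  have hm2 := hm.two_le
  haveI : Fact m.Prime := ⟨hm⟩
  haveI : NeZero m := ⟨hm.ne_zero⟩
  -- choose offsets
  have hf2' : ∀ v : ℕ, ∃ θ : ℕ, v ∈ Finset.Icc 1 n →
      ∀ i : Fin (m * n), f i = v ↔ ∃ t < m, (i : ℕ) = θ + t * (v + 1) := by
    intro v
    by_cases hv : v ∈ Finset.Icc 1 n
    · obtain ⟨θ, hθ⟩ := hf2 v hv; exact ⟨θ, fun _ => hθ⟩
    · exact ⟨0, fun hv' => absurd hv' hv⟩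
  choose θ hθ using hf2'
  -- fibers
  set fib : ℕ → Finset (Fin (m * n)) := fun v => univ.filter (fun i => f i = v) with hfibdef
  -- each fiber injects into range m
  have hinj : ∀ v ∈ Finset.Icc 1 n, Set.InjOn (fun i : Fin (m*n) => ((i:ℕ) - θ v) / (v+1)) (fib v) := by
    intro v hv i hi j hj hij
    obtain ⟨ti, hti, hei⟩ := (hθ v hv i).mp (by simpa [hfibdef] using hi)
    obtain ⟨tj, htj, hej⟩ := (hθ v hv j).mp (by simpa [hfibdef] using hj)
    simp only at hij
    rw [hei, hej, Nat.add_sub_cancel_left, Nat.add_sub_cancel_left,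
      Nat.mul_div_cancel _ (Nat.succ_pos v), Nat.mul_div_cancel _ (Nat.succ_pos v)] at hij
    exact Fin.val_injective (by rw [hei, hej, hij])
  have hmaps : ∀ v ∈ Finset.Icc 1 n, ∀ i ∈ fib v,
      ((i:ℕ) - θ v) / (v+1) ∈ Finset.range m := by
    intro v hv i hi
    obtain ⟨ti, hti, hei⟩ := (hθ v hv i).mp (by simpa [hfibdef] using hi)
    rw [hei, Nat.add_sub_cancel_left, Nat.mul_div_cancel _ (Nat.succ_pos v)]
    exact mem_range.mpr hti
  have hcard_le : ∀ v ∈ Finset.Icc 1 n, (fib v).card ≤ m := by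
    intro v hv
    have := Finset.card_le_card_of_injOn _ (hmaps v hv) (hinj v hv)
    simpa using this
  -- sum of fiber cards
  have hsum : ∑ v ∈ Finset.Icc 1 n, (fib v).card = m * n := by
    have := Finset.card_eq_sum_card_fiberwise (f := f) (s := univ) (t := Finset.Icc 1 n)
      (fun i _ => hf1 i)
    simpa [hfibdef] using this.symm
  have hncard : (Finset.Icc 1 n).card = n := by simp
  have hcard_eq : ∀ v ∈ Finset.Icc 1 n, (fib v).card = m := by
    intro v hv
    by_contra hne
    have hlt : (fib v).card < m := lt_of_le_of_ne (hcard_le v hv) hne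
    have : ∑ w ∈ Finset.Icc 1 n, (fib w).card < ∑ _w ∈ Finset.Icc 1 n, m :=
      Finset.sum_lt_sum (fun w hw => hcard_le w hw) ⟨v, hv, hlt⟩
    rw [hsum, Finset.sum_const, hncard, smul_eq_mul, mul_comm] at this
    exact lt_irrefl _ this
  -- image equality: all m positions realized
  have himg : ∀ v ∈ Finset.Icc 1 n,
      (fib v).image Fin.val = (Finset.range m).image (fun t => θ v + t * (v+1)) := by
    intro v hv
    apply Finset.eq_of_subset_of_card_le
    · intro x hx
      simp only [mem_image] at hx ⊢
      obtain ⟨i, hi, rfl⟩ := hx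
      obtain ⟨t, ht, hei⟩ := (hθ v hv i).mp (by simpa [hfibdef] using hi)
      exact ⟨t, mem_range.mpr ht, hei.symm⟩
    · calc ((Finset.range m).image (fun t => θ v + t * (v+1))).card
          ≤ (Finset.range m).card := Finset.card_image_le
        _ = m := Finset.card_range m
        _ = (fib v).card := (hcard_eq v hv).symm
        _ = ((fib v).image Fin.val).card :=
            (Finset.card_image_of_injective _ Fin.val_injective).symm
  -- count of multiples of m among positions
  have hP : (univ.filter (fun i : Fin (m*n) => m ∣ (i:ℕ))).card = n := by
    have h1 : (univ.filter (fun i : Fin (m*n) => m ∣ (i:ℕ))).image Fin.val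
        = (Finset.range (m*n)).filter (fun j => m ∣ j) := by
      ext j
      simp only [mem_image, mem_filter, mem_univ, true_and, mem_range]
      constructor
      · rintro ⟨i, hi, rfl⟩; exact ⟨i.isLt, hi⟩
      · rintro ⟨hj, hd⟩; exact ⟨⟨j, hj⟩, hd, rfl⟩
    have h2 : (Finset.range (m*n)).filter (fun j => m ∣ j)
        = (Finset.range n).image (fun k => m * k) := by
      ext j
      simp only [mem_filter, mem_range, mem_image]
      constructor
      · rintro ⟨hj, k, rfl⟩
        exact ⟨k, Nat.lt_of_mul_lt_mul_left hj, rfl⟩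
      · rintro ⟨k, hk, rfl⟩
        exact ⟨mul_lt_mul_of_pos_left hk (by omega), ⟨k, rfl⟩⟩
    rw [← Finset.card_image_of_injective _ Fin.val_injective, h1, h2,
      Finset.card_image_of_injective _ (mul_right_injective₀ (by omega : m ≠ 0)),
      Finset.card_range]
  -- per-value count
  set c : ℕ → ℕ := fun v => ((Finset.range m).filter (fun t => m ∣ θ v + t * (v+1))).card with hcdef
  have hfibcount : ∀ v ∈ Finset.Icc 1 n,
      ((fib v).filter (fun i : Fin (m*n) => m ∣ (i:ℕ))).card = c v := by
    intro v hv
    have ginj : Function.Injective (fun t => θ v + t * (v+1)) := by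
      intro a b hab
      simp only at hab
      have := Nat.add_left_cancel hab
      exact Nat.eq_of_mul_eq_mul_right (Nat.succ_pos v) this
    calc ((fib v).filter (fun i : Fin (m*n) => m ∣ (i:ℕ))).card
        = (((fib v).filter (fun i : Fin (m*n) => m ∣ (i:ℕ))).image Fin.val).card :=
          (Finset.card_image_of_injective _ Fin.val_injective).symm
      _ = (((fib v).image Fin.val).filter (fun j => m ∣ j)).card := by
          rw [Finset.filter_image]
      _ = (((Finset.range m).image (fun t => θ v + t * (v+1))).filter (fun j => m ∣ j)).card := by
          rw [himg v hv]
      _ = (((Finset.range m).filter (fun t => m ∣ θ v + t * (v+1))).image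
            (fun t => θ v + t * (v+1))).card := by rw [Finset.filter_image]
      _ = c v := Finset.card_image_of_injective _ ginj
  -- total count
  have htotal : ∑ v ∈ Finset.Icc 1 n, c v = n := by
    have hfw : (univ.filter (fun i : Fin (m*n) => m ∣ (i:ℕ))).card
        = ∑ v ∈ Finset.Icc 1 n,
            ((univ.filter (fun i : Fin (m*n) => m ∣ (i:ℕ))).filter (fun i => f i = v)).card :=
      Finset.card_eq_sum_card_fiberwise (fun i _ => hf1 i)
    refine (Finset.sum_congr rfl fun v hv => ?_).trans (hfw.symm.trans hP)
    rw [Finset.filter_comm]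
    exact (hfibcount v hv).symm
  -- good values contribute 1
  have hgood : ∀ v, ¬ m ∣ (v+1) → c v = 1 := by
    intro v hv
    have hu : ((v : ZMod m) + 1) ≠ 0 := by
      intro h0
      apply hv
      have : (((v+1 : ℕ)) : ZMod m) = 0 := by push_cast; exact h0
      exact (ZMod.natCast_eq_zero_iff _ _).mp this
    set c0 : ZMod m := (-(θ v)) * ((v : ZMod m) + 1)⁻¹ with hc0
    have key : ∀ t : ℕ, (m ∣ θ v + t * (v + 1)) ↔ (t : ZMod m) = c0 := by
      intro t
      rw [← ZMod.natCast_eq_zero_iff]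
      push_cast
      constructor
      · intro h
        rw [hc0]; field_simp; linear_combination h
      · intro h
        rw [h, hc0]; field_simp; ring
    have : ((Finset.range m).filter (fun t => m ∣ θ v + t * (v + 1))) = {c0.val} := by
      ext t
      simp only [mem_filter, mem_range, mem_singleton, key]
      constructor
      · rintro ⟨ht, h⟩
        rw [← h, ZMod.val_cast_of_lt ht]
      · rintro rfl
        exact ⟨ZMod.val_lt c0, ZMod.natCast_zmod_val c0⟩
    rw [hcdef]
    simp only [this, card_singleton]
  -- bad values contribute 0 or m
  have hbad : ∀ v, m ∣ (v+1) → m ∣ c v := by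
    intro v hv
    rw [hcdef]
    simp only
    by_cases hθd : m ∣ θ v
    · have : ((Finset.range m).filter (fun t => m ∣ θ v + t * (v + 1))) = Finset.range m := by
        apply Finset.filter_true_of_mem
        intro t _
        exact Nat.dvd_add hθd (Dvd.dvd.mul_left hv t)
      rw [this, card_range]
    · have : ((Finset.range m).filter (fun t => m ∣ θ v + t * (v + 1))) = ∅ := by
        apply Finset.filter_false_of_mem
        intro t _ hcon
        exact hθd ((Nat.dvd_add_right (Dvd.dvd.mul_left hv t)).mp (by rwa [add_comm] at hcon))
      simp [this]
  -- split sum into good and bad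
  set bad := (Finset.Icc 1 n).filter (fun v => m ∣ v + 1) with hbaddef
  set good := (Finset.Icc 1 n).filter (fun v => ¬ m ∣ v + 1) with hgooddef
  have hsplit : ∑ v ∈ good, c v + ∑ v ∈ bad, c v = n := by
    rw [add_comm]
    exact (Finset.sum_filter_add_sum_filter_not (Finset.Icc 1 n) (fun v => m ∣ v + 1) c).trans
      htotal
  have hgoodsum : ∑ v ∈ good, c v = good.card := by
    rw [Finset.card_eq_sum_ones]
    apply Finset.sum_congr rfl
    intro v hv
    exact hgood v (Finset.mem_filter.mp hv).2
  have hbadsum : m ∣ ∑ v ∈ bad, c v := by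
    apply Finset.dvd_sum
    intro v hv
    exact hbad v (Finset.mem_filter.mp hv).2
  have hcards : good.card + bad.card = n := by
    rw [add_comm, Finset.card_filter_add_card_filter_not]
    exact hncard
  have hdvd_bad : m ∣ bad.card := by
    obtain ⟨k, hk⟩ := hbadsum
    exact ⟨k, by omega⟩
  -- bad.card = (n+1)/m
  have hbadcard : bad.card = (n + 1) / m := by
    have himage : bad.image (fun v => v + 1) = (Finset.Ioc 0 (n+1)).filter (fun w => m ∣ w) := by
      ext w
      simp only [hbaddef, mem_image, mem_filter, Finset.mem_Icc, Finset.mem_Ioc]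
      constructor
      · rintro ⟨v, ⟨⟨hv1, hv2⟩, hvd⟩, rfl⟩
        exact ⟨⟨by omega, by omega⟩, hvd⟩
      · rintro ⟨⟨hw1, hw2⟩, hwd⟩
        have hwm : m ≤ w := Nat.le_of_dvd hw1 hwd
        exact ⟨w - 1, ⟨⟨by omega, by omega⟩, by rwa [Nat.sub_add_cancel (by omega)]⟩,
          Nat.sub_add_cancel (by omega)⟩
    rw [← Nat.Ioc_filter_dvd_card_eq_div, ← himage,
      Finset.card_image_of_injective _ (add_left_injective 1)]
  -- final arithmetic
  obtain ⟨s, hs⟩ := hdvd_bad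
  rw [hbadcard] at hs
  have hdm : n + 1 = m * ((n+1)/m) + (n+1) % m := (Nat.div_add_mod _ _).symm
  have hrlt : (n+1) % m < m := Nat.mod_lt _ (by omega)
  set r := (n+1) % m with hr
  have hn1 : n + 1 = m^2 * s + r := by
    rw [hdm, hs]; ring
  have hm2pos : 1 ≤ m^2 := Nat.one_le_pow _ _ (by omega)
  have hmle : m ≤ m^2 := by
    calc m = m * 1 := (mul_one m).symm
      _ ≤ m * m := Nat.mul_le_mul_left m (by omega)
      _ = m^2 := (sq m).symm
  rcases Nat.eq_zero_or_pos r with hr0 | hrpos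
  · left
    obtain ⟨s', rfl⟩ : ∃ s', s = s' + 1 := by
      rcases Nat.eq_zero_or_pos s with rfl | hspos
      · exfalso; simp [hr0] at hn1
      · exact ⟨s - 1, by omega⟩
    have hexp : m^2 * (s' + 1) = m^2 * s' + m^2 := by ring
    rw [hexp] at hn1
    have hneq : n = m^2 * s' + (m^2 - 1) := by omega
    rw [hneq, Nat.mul_add_mod]
    exact Nat.mod_eq_of_lt (by omega)
  · right
    have hneq : n = m^2 * s + (r - 1) := by omega
    rw [hneq, Nat.mul_add_mod]
    rw [Nat.mod_eq_of_lt (by omega : r - 1 < m^2)]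
    omega
end

section
/- If a Langford sequence of order n with multiplicity 3 exists, then n ≡ 0, 1, or 8 (mod 9). -/
open Finset

private lemma six_sq (N : ℕ) : 6 * ∑ i ∈ range (N+1), i^2 = N*(N+1)*(2*N+1) := by
  induction N with
  | zero => simp
  | succ k ih =>
    rw [Finset.sum_range_succ, Nat.mul_add, ih]
    ring

private lemma sum_sq_shift (n : ℕ) :
    ∑ i ∈ range (n+2), i^2 = 1 + ∑ v ∈ Icc 1 n, (v+1)^2 := by
  induction n with
  | zero => decide
  | succ k ih =>
    rw [Finset.sum_range_succ, ih, Finset.sum_Icc_succ_top (by omega : 1 ≤ k+1)]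
    ring

private lemma zmod_key : ∀ x : ZMod 18,
    (3*x+2)*(3*x+3)*(2*(3*x+2)+1) + 30 = 5*((x+2)*(x+3)*(2*x+5)) →
    (x.val + 1) % 9 = 0 ∨ (x.val+1) % 9 = 1 ∨ (x.val+1) % 9 = 8 := by decide



/-- If a Langford sequence of order `n` with multiplicity 3 exists, then
`n ≡ 0, 1` or `8 (mod 9)`. -/
theorem langford_triple_necessary (n : ℕ)
    (h : ∃ f : Fin (3 * n) → ℕ, IsLangford 3 n f) :
    n % 9 = 0 ∨ n % 9 = 1 ∨ n % 9 = 8 := by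
  rcases n with _ | k
  · left; rfl
  set n := k + 1 with hn
  obtain ⟨f, hmem, hpos⟩ := h
  have hpos' : ∀ v : ℕ, ∃ θ : ℕ, v ∈ Finset.Icc 1 n →
      ∀ i : Fin (3 * n), f i = v ↔ ∃ t < 3, (i : ℕ) = θ + t * (v + 1) := by
    intro v
    by_cases hv : v ∈ Finset.Icc 1 n
    · obtain ⟨θ, hθ⟩ := hpos v hv
      exact ⟨θ, fun _ => hθ⟩
    · exact ⟨0, fun hv' => absurd hv' hv⟩
  choose θ hθ using hpos'
  -- fibers
  set F : ℕ → Finset (Fin (3*n)) := fun v => univ.filter (fun i => f i = v) with hF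
  set T : ℕ → Finset ℕ := fun v => (range 3).image (fun t => θ v + t * (v+1)) with hT
  have hTcard : ∀ v, (T v).card ≤ 3 := fun v =>
    le_trans (Finset.card_image_le) (by simp)
  have hFsub : ∀ v ∈ Finset.Icc 1 n, (F v).image (Fin.val) ⊆ T v := by
    intro v hv x hx
    simp only [hF, Finset.mem_image, Finset.mem_filter, Finset.mem_univ, true_and] at hx
    obtain ⟨i, hi, rfl⟩ := hx
    obtain ⟨t, ht, hit⟩ := (hθ v hv i).1 hi
    simp only [hT, Finset.mem_image, Finset.mem_range]
    exact ⟨t, ht, hit.symm⟩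
  have hFcard_le : ∀ v ∈ Finset.Icc 1 n, (F v).card ≤ 3 := by
    intro v hv
    calc (F v).card = ((F v).image Fin.val).card :=
          (Finset.card_image_of_injective _ Fin.val_injective).symm
      _ ≤ (T v).card := Finset.card_le_card (hFsub v hv)
      _ ≤ 3 := hTcard v
  have hsum : ∑ v ∈ Finset.Icc 1 n, (F v).card = 3 * n := by
    have := Finset.card_eq_sum_card_fiberwise (f := f)
      (s := (univ : Finset (Fin (3*n)))) (t := Finset.Icc 1 n) (fun i _ => hmem i)
    simpa [hF] using this.symm
  have hFcard : ∀ v ∈ Finset.Icc 1 n, (F v).card = 3 := by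
    by_contra hcon
    push_neg at hcon
    obtain ⟨v0, hv0, hne⟩ := hcon
    have hlt : ∑ v ∈ Finset.Icc 1 n, (F v).card < ∑ v ∈ Finset.Icc 1 n, 3 :=
      Finset.sum_lt_sum (fun v hv => hFcard_le v hv)
        ⟨v0, hv0, lt_of_le_of_ne (hFcard_le v0 hv0) hne⟩
    rw [hsum, Finset.sum_const, Nat.card_Icc, smul_eq_mul] at hlt
    omega
  have hFeq : ∀ v ∈ Finset.Icc 1 n, (F v).image Fin.val = T v := by
    intro v hv
    apply Finset.eq_of_subset_of_card_le (hFsub v hv)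
    rw [Finset.card_image_of_injective _ Fin.val_injective, hFcard v hv]
    exact hTcard v
  -- sum of squares over each fiber
  have hfib_sum : ∀ v ∈ Finset.Icc 1 n,
      ∑ i ∈ F v, (i : ℕ)^2 = 3*(θ v)^2 + 6*(θ v)*(v+1) + 5*(v+1)^2 := by
    intro v hv
    have h1 : ∑ i ∈ F v, (i : ℕ)^2 = ∑ x ∈ (F v).image Fin.val, x^2 :=
      (Finset.sum_image (g := Fin.val) (f := fun x => x^2)
        (fun a _ b _ hab => Fin.val_injective hab)).symm
    have hinj : ∀ a ∈ range 3, ∀ b ∈ range 3,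
        θ v + a * (v+1) = θ v + b * (v+1) → a = b := by
      intro a _ b _ hab
      have : a * (v+1) = b * (v+1) := by omega
      exact Nat.eq_of_mul_eq_mul_right (by omega) this
    have h2 : ∑ x ∈ T v, x^2 = ∑ t ∈ range 3, (θ v + t * (v+1))^2 :=
      Finset.sum_image (f := fun x => x^2) hinj
    rw [h1, hFeq v hv, h2]
    simp [Finset.sum_range_succ]
    ring
  -- global equation
  have hglobal : ∑ j ∈ range (3*n), j^2
      = ∑ v ∈ Finset.Icc 1 n, (3*(θ v)^2 + 6*(θ v)*(v+1) + 5*(v+1)^2) := by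
    rw [← Fin.sum_univ_eq_sum_range (fun j => j^2) (3*n),
      ← Finset.sum_fiberwise_of_maps_to (g := f) (fun i _ => hmem i)
        (fun i : Fin (3*n) => (i:ℕ)^2)]
    exact Finset.sum_congr rfl hfib_sum
  set M := ∑ v ∈ Finset.Icc 1 n, ((θ v)^2 + 2*(θ v)*(v+1)) with hM
  have hsplit : ∑ v ∈ Finset.Icc 1 n, (3*(θ v)^2 + 6*(θ v)*(v+1) + 5*(v+1)^2)
      = 3 * M + 5 * ∑ v ∈ Finset.Icc 1 n, (v+1)^2 := by
    rw [hM, Finset.mul_sum, Finset.mul_sum, ← Finset.sum_add_distrib]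
    exact Finset.sum_congr rfl (fun v _ => by ring)
  -- closed forms
  have key : (3*k+2)*(3*k+3)*(2*(3*k+2)+1) + 30 = 18 * M + 5*((k+2)*(k+3)*(2*k+5)) := by
    have e1 : 6 * ∑ j ∈ range (3*n), j^2 = (3*k+2)*(3*k+3)*(2*(3*k+2)+1) := by
      have h3 : 3 * n = (3*k+2) + 1 := by omega
      rw [h3, six_sq]
    have e2 : 6 * (1 + ∑ v ∈ Finset.Icc 1 n, (v+1)^2) = (k+2)*(k+3)*(2*k+5) := by
      rw [← sum_sq_shift n]
      have : n + 2 = (n+1) + 1 := rfl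
      rw [this, six_sq]
      ring
    have := congrArg (fun x => 6 * x) (hglobal.trans hsplit)
    beta_reduce at this
    omega
  -- pass to ZMod 18
  have hz : ((3*(k:ZMod 18)+2)*(3*(k:ZMod 18)+3)*(2*(3*(k:ZMod 18)+2)+1) + 30 : ZMod 18)
      = 5*(((k:ZMod 18)+2)*((k:ZMod 18)+3)*(2*(k:ZMod 18)+5)) := by
    have := congrArg (fun x : ℕ => (x : ZMod 18)) key
    push_cast at this
    rw [this, show (18:ZMod 18) = 0 from by decide, zero_mul, zero_add]
  have hval := zmod_key (k : ZMod 18) hz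
  rw [ZMod.val_natCast] at hval
  omega
end

section
/- If a Langford sequence of order n with multiplicity 4 exists, then n ≡ 0 or 7 (mod 8). -/
/-- Gauss sum, subtraction-free form. -/
lemma langford_gauss' (k : ℕ) : (∑ j ∈ Finset.range k, j) * 2 + k = k * k := by
  induction k with
  | zero => simp
  | succ m ih =>
    rw [Finset.sum_range_succ]
    calc ((∑ j ∈ Finset.range m, j) + m) * 2 + (m + 1)
        = ((∑ j ∈ Finset.range m, j) * 2 + m) + (m + m + 1) := by ring
      _ = m * m + (m + m + 1) := by rw [ih]
      _ = (m + 1) * (m + 1) := by ring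

lemma langford_gaussIcc (n : ℕ) : (∑ v ∈ Finset.Icc 1 n, v) * 2 = n * (n + 1) := by
  induction n with
  | zero => simp
  | succ m ih =>
    rw [Finset.sum_Icc_succ_top (by omega)]
    calc ((∑ v ∈ Finset.Icc 1 m, v) + (m + 1)) * 2
        = (∑ v ∈ Finset.Icc 1 m, v) * 2 + 2 * (m + 1) := by ring
      _ = m * (m + 1) + 2 * (m + 1) := by rw [ih]
      _ = (m + 1) * (m + 1 + 1) := by ring

/-- Sum of `⌊j/2⌋ mod 2` over a range of length `4k`. -/
lemma langford_wsum (k : ℕ) : (∑ j ∈ Finset.range (4 * k), j / 2 % 2) = 2 * k := by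
  induction k with
  | zero => simp
  | succ m ih =>
    have h4 : 4 * (m + 1) = 4 * m + 1 + 1 + 1 + 1 := by ring
    rw [h4, Finset.sum_range_succ, Finset.sum_range_succ, Finset.sum_range_succ,
      Finset.sum_range_succ, ih]
    omega

/-- Counting values `v ≡ 3 (mod 4)` in `[1, n]`, weighted. -/
lemma langford_csum (n : ℕ) :
    (∑ v ∈ Finset.Icc 1 n, (if v % 4 = 3 then 0 else 2)) = 2 * n - 2 * ((n + 1) / 4) := by
  induction n with
  | zero => simp
  | succ m ih =>
    rw [Finset.sum_Icc_succ_top (by omega), ih]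
    split_ifs with h <;> omega

lemma langford_quad0 (a s : ℕ) (h : s % 4 = 0) :
    a/2%2 + (a+s)/2%2 + (a+2*s)/2%2 + (a+3*s)/2%2 = 0 ∨
    a/2%2 + (a+s)/2%2 + (a+2*s)/2%2 + (a+3*s)/2%2 = 4 := by
  have e0 : a/2%2 = a%4/2 := by omega
  have e1 : (a+s)/2%2 = (a+s)%4/2 := by omega
  have e2 : (a+2*s)/2%2 = (a+2*s)%4/2 := by omega
  have e3 : (a+3*s)/2%2 = (a+3*s)%4/2 := by omega
  omega

lemma langford_quad2 (a s : ℕ) (h : s % 4 ≠ 0) :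
    a/2%2 + (a+s)/2%2 + (a+2*s)/2%2 + (a+3*s)/2%2 = 2 := by
  have e0 : a/2%2 = a%4/2 := by omega
  have e1 : (a+s)/2%2 = (a+s)%4/2 := by omega
  have e2 : (a+2*s)/2%2 = (a+2*s)%4/2 := by omega
  have e3 : (a+3*s)/2%2 = (a+3*s)%4/2 := by omega
  have hs : s % 2 = 1 ∨ s % 4 = 2 := by omega
  rcases hs with hs | hs <;> omega

/-- If a Langford sequence of order `n` with multiplicity 4 exists, then
`n ≡ 0` or `7 (mod 8)`. -/
theorem langford_quadruple_necessary (n : ℕ)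
    (h : ∃ f : Fin (4 * n) → ℕ, IsLangford 4 n f) :
    n % 8 = 0 ∨ n % 8 = 7 := by
  obtain ⟨f, hmem, hex⟩ := h
  choose θ0 hθ0 using hex
  set θ : ℕ → ℕ := fun v => if hv : v ∈ Finset.Icc 1 n then θ0 v hv else 0 with hθdef
  have hiff : ∀ v, ∀ hv : v ∈ Finset.Icc 1 n, ∀ i : Fin (4 * n),
      f i = v ↔ ∃ t < 4, (i : ℕ) = θ v + t * (v + 1) := by
    intro v hv i
    simp only [hθdef, dif_pos hv]
    exact hθ0 v hv i
  -- injectivity of the position map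
  have hinj : ∀ v : ℕ, ∀ a ∈ Finset.range 4, ∀ b ∈ Finset.range 4,
      θ v + a * (v + 1) = θ v + b * (v + 1) → a = b := by
    intro v a _ b _ hab
    have h1 : a * (v + 1) = b * (v + 1) := Nat.add_left_cancel hab
    exact Nat.eq_of_mul_eq_mul_right (Nat.succ_pos v) h1
  have hcard_r : ∀ v : ℕ, ((Finset.range 4).image fun t => θ v + t * (v + 1)).card = 4 := by
    intro v
    rw [Finset.card_image_of_injOn (fun a ha b hb hab => hinj v a ha b hb hab),
      Finset.card_range]
  -- the fibers
  have himg_sub : ∀ v ∈ Finset.Icc 1 n,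
      ((Finset.univ.filter fun i => f i = v).image Fin.val) ⊆
        (Finset.range 4).image fun t => θ v + t * (v + 1) := by
    intro v hv j hj
    simp only [Finset.mem_image, Finset.mem_filter, Finset.mem_univ, true_and] at hj
    obtain ⟨i, hi, rfl⟩ := hj
    obtain ⟨t, ht, hit⟩ := (hiff v hv i).mp hi
    exact Finset.mem_image.mpr ⟨t, Finset.mem_range.mpr ht, hit.symm⟩
  have hcard_le : ∀ v ∈ Finset.Icc 1 n, (Finset.univ.filter fun i => f i = v).card ≤ 4 := by
    intro v hv
    have h1 : ((Finset.univ.filter fun i => f i = v).image Fin.val).card =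
        (Finset.univ.filter fun i => f i = v).card :=
      Finset.card_image_of_injective _ Fin.val_injective
    have h2 := Finset.card_le_card (himg_sub v hv)
    rw [h1, hcard_r v] at h2
    exact h2
  have hsum : ∑ v ∈ Finset.Icc 1 n, (Finset.univ.filter fun i => f i = v).card = 4 * n := by
    have h1 := Finset.card_eq_sum_card_fiberwise
      (s := (Finset.univ : Finset (Fin (4 * n)))) (t := Finset.Icc 1 n) (f := f)
      (fun i _ => hmem i)
    rw [Finset.card_univ, Fintype.card_fin] at h1
    exact h1.symm
  have hcard4 : ∀ v ∈ Finset.Icc 1 n, (Finset.univ.filter fun i => f i = v).card = 4 := by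
    by_contra hcon
    push_neg at hcon
    obtain ⟨v0, hv0, hne⟩ := hcon
    have hlt : (Finset.univ.filter fun i => f i = v0).card < 4 :=
      lt_of_le_of_ne (hcard_le v0 hv0) hne
    have h1 : ∑ v ∈ Finset.Icc 1 n, (Finset.univ.filter fun i => f i = v).card <
        ∑ v ∈ Finset.Icc 1 n, 4 :=
      Finset.sum_lt_sum (fun v hv => hcard_le v hv) ⟨v0, hv0, hlt⟩
    rw [hsum, Finset.sum_const, Nat.card_Icc] at h1
    simp at h1
    omega
  have himg : ∀ v ∈ Finset.Icc 1 n,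
      ((Finset.univ.filter fun i => f i = v).image Fin.val) =
        (Finset.range 4).image fun t => θ v + t * (v + 1) := by
    intro v hv
    apply Finset.eq_of_subset_of_card_le (himg_sub v hv)
    rw [hcard_r v, Finset.card_image_of_injective _ Fin.val_injective, hcard4 v hv]
  -- the key double-counting identity
  have key : ∀ w : ℕ → ℕ,
      (∑ j ∈ Finset.range (4 * n), w j) =
        ∑ v ∈ Finset.Icc 1 n, ∑ t ∈ Finset.range 4, w (θ v + t * (v + 1)) := by
    intro w
    rw [← Fin.sum_univ_eq_sum_range (fun j => w j) (4 * n)]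
    rw [← Finset.sum_fiberwise_of_maps_to (fun i _ => hmem i) (fun i => w i.val)]
    apply Finset.sum_congr rfl
    intro v hv
    have h1 : (∑ i ∈ Finset.univ.filter (fun i => f i = v), w i.val) =
        ∑ j ∈ (Finset.univ.filter fun i => f i = v).image Fin.val, w j :=
      (Finset.sum_image (fun a _ b _ hab => Fin.val_injective hab)).symm
    rw [h1, himg v hv, Finset.sum_image (fun a ha b hb hab => hinj v a ha b hb hab)]
  -- Invariant A: sum of positions
  have EA := key id
  simp only [id] at EA
  have hinnerA : ∀ v ∈ Finset.Icc 1 n,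
      (∑ t ∈ Finset.range 4, (θ v + t * (v + 1))) = 4 * θ v + 6 * (v + 1) := by
    intro v _
    simp [Finset.sum_range_succ]
    ring
  rw [Finset.sum_congr rfl hinnerA] at EA
  set T := ∑ v ∈ Finset.Icc 1 n, θ v with hT
  set S := ∑ v ∈ Finset.Icc 1 n, v with hS
  have hsplit : (∑ v ∈ Finset.Icc 1 n, (4 * θ v + 6 * (v + 1))) = 4 * T + 6 * S + 6 * n := by
    rw [Finset.sum_add_distrib, ← Finset.mul_sum, ← Finset.mul_sum, ← hT]
    have : (∑ v ∈ Finset.Icc 1 n, (v + 1)) = S + n := by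
      rw [Finset.sum_add_distrib, ← hS, Finset.sum_const, Nat.card_Icc]
      simp
    rw [this]
    ring
  rw [hsplit] at EA
  have E3 : 8 * T + 6 * (n * (n + 1)) + 16 * n = 16 * (n * n) := by
    have h1 := langford_gauss' (4 * n)
    rw [EA] at h1
    have h2 : (4 * T + 6 * S + 6 * n) * 2 + 4 * n = 8 * T + 6 * (S * 2) + 16 * n := by ring
    rw [h2, langford_gaussIcc n] at h1
    have h3 : (4 * n) * (4 * n) = 16 * (n * n) := by ring
    rw [h3] at h1
    exact h1
  have hM : (n * (n + 1)) % 4 = 0 := by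
    generalize hA : n * (n + 1) = A at E3
    generalize hB : n * n = B at E3
    omega
  have hA4 : n % 4 = 0 ∨ n % 4 = 3 := by
    have h1 := Nat.mul_mod n (n + 1) 4
    rw [hM] at h1
    have h2 := Nat.add_mod n 1 4
    have h4 : n % 4 = 0 ∨ n % 4 = 1 ∨ n % 4 = 2 ∨ n % 4 = 3 := by omega
    rcases h4 with hc | hc | hc | hc
    · exact Or.inl hc
    · rw [hc] at h2; norm_num at h2; rw [hc, h2] at h1; norm_num at h1
    · rw [hc] at h2; norm_num at h2; rw [hc, h2] at h1; norm_num at h1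
    · exact Or.inr hc
  -- Invariant C: sum of ⌊j/2⌋ mod 2 over positions
  have EC := key (fun j => j / 2 % 2)
  rw [langford_wsum n] at EC
  have hc : ∀ v ∈ Finset.Icc 1 n,
      ((∑ t ∈ Finset.range 4, (θ v + t * (v + 1)) / 2 % 2 : ℕ) : ZMod 4) =
        ((if v % 4 = 3 then 0 else 2 : ℕ) : ZMod 4) := by
    intro v _
    have hexp : (∑ t ∈ Finset.range 4, (θ v + t * (v + 1)) / 2 % 2) =
        θ v / 2 % 2 + (θ v + (v + 1)) / 2 % 2 + (θ v + 2 * (v + 1)) / 2 % 2 +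
          (θ v + 3 * (v + 1)) / 2 % 2 := by
      rw [Finset.sum_range_succ, Finset.sum_range_succ, Finset.sum_range_succ,
        Finset.sum_range_succ, Finset.sum_range_zero]
      ring_nf
    rcases eq_or_ne (v % 4) 3 with h3 | h3
    · have h04 : (∑ t ∈ Finset.range 4, (θ v + t * (v + 1)) / 2 % 2) = 0 ∨
          (∑ t ∈ Finset.range 4, (θ v + t * (v + 1)) / 2 % 2) = 4 := by
        rw [hexp]; exact langford_quad0 (θ v) (v + 1) (by omega)
      rw [if_pos h3]
      rcases h04 with h | h <;> rw [h] <;> decide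
    · have h2 : (∑ t ∈ Finset.range 4, (θ v + t * (v + 1)) / 2 % 2) = 2 := by
        rw [hexp]; exact langford_quad2 (θ v) (v + 1) (by omega)
      rw [if_neg h3, h2]
  have hZ : ((2 * n : ℕ) : ZMod 4) = ((2 * n - 2 * ((n + 1) / 4) : ℕ) : ZMod 4) := by
    calc ((2 * n : ℕ) : ZMod 4)
        = ((∑ v ∈ Finset.Icc 1 n, ∑ t ∈ Finset.range 4,
            (θ v + t * (v + 1)) / 2 % 2 : ℕ) : ZMod 4) := by rw [← EC]
      _ = ∑ v ∈ Finset.Icc 1 n,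
            ((∑ t ∈ Finset.range 4, (θ v + t * (v + 1)) / 2 % 2 : ℕ) : ZMod 4) := by
          push_cast; rfl
      _ = ∑ v ∈ Finset.Icc 1 n, ((if v % 4 = 3 then 0 else 2 : ℕ) : ZMod 4) :=
          Finset.sum_congr rfl hc
      _ = ((∑ v ∈ Finset.Icc 1 n, (if v % 4 = 3 then 0 else 2) : ℕ) : ZMod 4) := by
          push_cast; rfl
      _ = ((2 * n - 2 * ((n + 1) / 4) : ℕ) : ZMod 4) := by rw [langford_csum n]
  have hC : (2 * n) % 4 = (2 * n - 2 * ((n + 1) / 4)) % 4 :=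
    (ZMod.natCast_eq_natCast_iff _ _ _).mp hZ
  omega
end

section
/- There are exactly 3 Langford sequences of order 9 with multiplicity 3, up to reversal: 1 9 1 6 1 8 2 5 7 2 6 9 2 5 8 4 7 6 3 5 4 9 3 8 7 4 3; 1 9 1 2 1 8 2 4 6 2 7 9 4 5 8 6 3 4 7 5 3 9 6 8 3 5 7; and 3 4 7 9 3 6 4 8 3 5 7 4 6 9 2 5 8 2 7 6 2 5 1 9 1 8 1. -/
def langfordL1 : Fin (3 * 9) → ℕ := fun i =>
  ([1, 9, 1, 6, 1, 8, 2, 5, 7, 2, 6, 9, 2, 5, 8, 4, 7, 6, 3, 5, 4, 9, 3, 8, 7, 4, 3] :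
    List ℕ).getD (i : ℕ) 0

def langfordL2 : Fin (3 * 9) → ℕ := fun i =>
  ([1, 9, 1, 2, 1, 8, 2, 4, 6, 2, 7, 9, 4, 5, 8, 6, 3, 4, 7, 5, 3, 9, 6, 8, 3, 5, 7] :
    List ℕ).getD (i : ℕ) 0

def langfordL3 : Fin (3 * 9) → ℕ := fun i =>
  ([3, 4, 7, 9, 3, 6, 4, 8, 3, 5, 7, 4, 6, 9, 2, 5, 8, 2, 7, 6, 2, 5, 1, 9, 1, 8, 1] :
    List ℕ).getD (i : ℕ) 0

/-! ### Auxiliary machinery -/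

/-- Pairwise disjointness of the occurrence triples of two placed values. -/
def dj (x a y b : Nat) : Prop :=
  x ≠ y ∧ x ≠ y + (b+1) ∧ x ≠ y + 2*(b+1) ∧
  x + (a+1) ≠ y ∧ x + (a+1) ≠ y + (b+1) ∧ x + (a+1) ≠ y + 2*(b+1) ∧
  x + 2*(a+1) ≠ y ∧ x + 2*(a+1) ≠ y + (b+1) ∧ x + 2*(a+1) ≠ y + 2*(b+1)

instance (x a y b : Nat) : Decidable (dj x a y b) := by unfold dj; infer_instance

set_option synthInstance.maxSize 100000
set_option synthInstance.maxHeartbeats 1000000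

def P0 (t1 t2 t3 t4 t5 t6 t7 t8 t9 : Nat) : Prop :=
  (t1 = 0 ∧ t2 = 6 ∧ t3 = 18 ∧ t4 = 15 ∧ t5 = 7 ∧ t6 = 3 ∧ t7 = 8 ∧ t8 = 5 ∧ t9 = 1) ∨
  (t1 = 0 ∧ t2 = 3 ∧ t3 = 16 ∧ t4 = 7 ∧ t5 = 13 ∧ t6 = 8 ∧ t7 = 10 ∧ t8 = 5 ∧ t9 = 1) ∨
  (t1 = 22 ∧ t2 = 14 ∧ t3 = 0 ∧ t4 = 1 ∧ t5 = 9 ∧ t6 = 5 ∧ t7 = 2 ∧ t8 = 7 ∧ t9 = 3) ∨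
  (t1 = 22 ∧ t2 = 14 ∧ t3 = 0 ∧ t4 = 1 ∧ t5 = 7 ∧ t6 = 9 ∧ t7 = 2 ∧ t8 = 3 ∧ t9 = 5) ∨
  (t1 = 22 ∧ t2 = 17 ∧ t3 = 2 ∧ t4 = 9 ∧ t5 = 1 ∧ t6 = 4 ∧ t7 = 0 ∧ t8 = 3 ∧ t9 = 5) ∨
  (t1 = 0 ∧ t2 = 6 ∧ t3 = 18 ∧ t4 = 15 ∧ t5 = 5 ∧ t6 = 7 ∧ t7 = 8 ∧ t8 = 1 ∧ t9 = 3)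

instance (t1 t2 t3 t4 t5 t6 t7 t8 t9 : Nat) : Decidable (P0 t1 t2 t3 t4 t5 t6 t7 t8 t9) := by unfold P0; infer_instance

def P1 (t2 t3 t4 t5 t6 t7 t8 t9 : Nat) : Prop :=
  ∀ t1 < 23, dj t1 1 t2 2 → dj t1 1 t3 3 → dj t1 1 t4 4 → dj t1 1 t5 5 → dj t1 1 t6 6 → dj t1 1 t7 7 → dj t1 1 t8 8 → dj t1 1 t9 9 → P0 t1 t2 t3 t4 t5 t6 t7 t8 t9

instance (t2 t3 t4 t5 t6 t7 t8 t9 : Nat) : Decidable (P1 t2 t3 t4 t5 t6 t7 t8 t9) := by unfold P1; infer_instance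

def P2 (t3 t4 t5 t6 t7 t8 t9 : Nat) : Prop :=
  ∀ t2 < 21, dj t2 2 t3 3 → dj t2 2 t4 4 → dj t2 2 t5 5 → dj t2 2 t6 6 → dj t2 2 t7 7 → dj t2 2 t8 8 → dj t2 2 t9 9 → P1 t2 t3 t4 t5 t6 t7 t8 t9

instance (t3 t4 t5 t6 t7 t8 t9 : Nat) : Decidable (P2 t3 t4 t5 t6 t7 t8 t9) := by unfold P2; infer_instance

def P3 (t4 t5 t6 t7 t8 t9 : Nat) : Prop :=
  ∀ t3 < 19, dj t3 3 t4 4 → dj t3 3 t5 5 → dj t3 3 t6 6 → dj t3 3 t7 7 → dj t3 3 t8 8 → dj t3 3 t9 9 → P2 t3 t4 t5 t6 t7 t8 t9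

instance (t4 t5 t6 t7 t8 t9 : Nat) : Decidable (P3 t4 t5 t6 t7 t8 t9) := by unfold P3; infer_instance

def P4 (t5 t6 t7 t8 t9 : Nat) : Prop :=
  ∀ t4 < 17, dj t4 4 t5 5 → dj t4 4 t6 6 → dj t4 4 t7 7 → dj t4 4 t8 8 → dj t4 4 t9 9 → P3 t4 t5 t6 t7 t8 t9

instance (t5 t6 t7 t8 t9 : Nat) : Decidable (P4 t5 t6 t7 t8 t9) := by unfold P4; infer_instance

def P5 (t6 t7 t8 t9 : Nat) : Prop :=
  ∀ t5 < 15, dj t5 5 t6 6 → dj t5 5 t7 7 → dj t5 5 t8 8 → dj t5 5 t9 9 → P4 t5 t6 t7 t8 t9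

instance (t6 t7 t8 t9 : Nat) : Decidable (P5 t6 t7 t8 t9) := by unfold P5; infer_instance

def P6 (t7 t8 t9 : Nat) : Prop :=
  ∀ t6 < 13, dj t6 6 t7 7 → dj t6 6 t8 8 → dj t6 6 t9 9 → P5 t6 t7 t8 t9

instance (t7 t8 t9 : Nat) : Decidable (P6 t7 t8 t9) := by unfold P6; infer_instance

def P7 (t8 t9 : Nat) : Prop :=
  ∀ t7 < 11, dj t7 7 t8 8 → dj t7 7 t9 9 → P6 t7 t8 t9

instance (t8 t9 : Nat) : Decidable (P7 t8 t9) := by unfold P7; infer_instance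

def P8 (t9 : Nat) : Prop :=
  ∀ t8 < 9, dj t8 8 t9 9 → P7 t8 t9

instance (t9 : Nat) : Decidable (P8 t9) := by unfold P8; infer_instance

def P9 : Prop :=
  ∀ t9 < 7, P8 t9

instance : Decidable (P9 ) := by unfold P9; infer_instance

set_option maxRecDepth 1000000 in
set_option maxHeartbeats 10000000 in
theorem key : P9 := by decide

def mkθ (a b c d e g h i j : ℕ) : ℕ → ℕ := fun v =>
  ([a, b, c, d, e, g, h, i, j] : List ℕ).getD (v - 1) 0

lemma card3 (a b c : ℕ) : ({a, b, c} : Finset ℕ).card ≤ 3 := by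
  classical
  calc ({a, b, c} : Finset ℕ).card ≤ ({b, c} : Finset ℕ).card + 1 := Finset.card_insert_le _ _
    _ ≤ (({c} : Finset ℕ).card + 1) + 1 := Nat.add_le_add_right (Finset.card_insert_le _ _) 1
    _ ≤ 3 := by simp

lemma card2 (a b : ℕ) : ({a, b} : Finset ℕ).card ≤ 2 := by
  classical
  calc ({a, b} : Finset ℕ).card ≤ ({b} : Finset ℕ).card + 1 := Finset.card_insert_le _ _
    _ ≤ 2 := by simp

lemma theta_bound (f : Fin (3 * 9) → ℕ) (Θ : ℕ → ℕ)
    (hrange : ∀ i, f i ∈ Finset.Icc 1 9)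
    (hiff : ∀ v ∈ Finset.Icc 1 9, ∀ i : Fin (3 * 9),
      f i = v ↔ ∃ t < 3, (i : ℕ) = Θ v + t * (v + 1)) :
    ∀ v ∈ Finset.Icc 1 9, Θ v + 2 * (v + 1) ≤ 26 := by
  classical
  set S : ℕ → Finset (Fin (3 * 9)) := fun v => Finset.univ.filter (fun i => f i = v) with hS
  have hmem : ∀ v ∈ Finset.Icc 1 9, ∀ i ∈ S v, ∃ t < 3, (i : ℕ) = Θ v + t * (v + 1) := by
    intro v hv i hi
    rw [hS] at hi
    simp only [Finset.mem_filter] at hi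
    exact (hiff v hv i).mp hi.2
  have hle3 : ∀ v ∈ Finset.Icc 1 9, (S v).card ≤ 3 := by
    intro v hv
    have h : (S v).card ≤ ({Θ v, Θ v + (v+1), Θ v + 2*(v+1)} : Finset ℕ).card := by
      apply Finset.card_le_card_of_injOn (fun i : Fin (3 * 9) => (i : ℕ))
      · intro i hi
        obtain ⟨t, ht, hti⟩ := hmem v hv i hi
        interval_cases t <;> (simp only [Finset.mem_coe, Finset.mem_insert, Finset.mem_singleton]; omega)
      · intro i _ j _ hij
        exact Fin.val_injective hij
    exact h.trans (card3 _ _ _)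
  have hcover : (Finset.univ : Finset (Fin (3 * 9))) ⊆ (Finset.Icc 1 9).biUnion S := by
    intro i _
    refine Finset.mem_biUnion.mpr ⟨f i, hrange i, ?_⟩
    rw [hS]
    simp
  have h27 : 27 ≤ ∑ v ∈ Finset.Icc 1 9, (S v).card := by
    have h1 : (Finset.univ : Finset (Fin (3 * 9))).card ≤ ((Finset.Icc 1 9).biUnion S).card :=
      Finset.card_le_card hcover
    have h2 := Finset.card_biUnion_le (s := Finset.Icc 1 9) (t := S)
    simp only [Finset.card_univ, Fintype.card_fin] at h1
    omega
  have hall : ∀ v ∈ Finset.Icc 1 9, (S v).card = 3 := by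
    intro v hv
    by_contra hne
    have hlt : (S v).card < 3 := lt_of_le_of_ne (hle3 v hv) hne
    have hsl := Finset.sum_lt_sum (f := fun v => (S v).card) (g := fun _ => 3) hle3 ⟨v, hv, hlt⟩
    simp only [Finset.sum_const, Nat.card_Icc, smul_eq_mul] at hsl
    omega
  intro v hv
  by_contra hgt
  push_neg at hgt
  have hle2 : (S v).card ≤ 2 := by
    have h : (S v).card ≤ ({Θ v, Θ v + (v+1)} : Finset ℕ).card := by
      apply Finset.card_le_card_of_injOn (fun i : Fin (3 * 9) => (i : ℕ))
      · intro i hi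
        obtain ⟨t, ht, hti⟩ := hmem v hv i hi
        have hi27 : (i : ℕ) < 3 * 9 := i.isLt
        interval_cases t <;> (simp only [Finset.mem_coe, Finset.mem_insert, Finset.mem_singleton]; omega)
      · intro i _ j _ hij
        exact Fin.val_injective hij
    exact h.trans (card2 _ _)
  have h3 := hall v hv
  omega

lemma theta_dj (f : Fin (3 * 9) → ℕ) (Θ : ℕ → ℕ)
    (hiff : ∀ v ∈ Finset.Icc 1 9, ∀ i : Fin (3 * 9),
      f i = v ↔ ∃ t < 3, (i : ℕ) = Θ v + t * (v + 1))
    (hb : ∀ v ∈ Finset.Icc 1 9, Θ v + 2 * (v + 1) ≤ 26) :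
    ∀ v ∈ Finset.Icc 1 9, ∀ w ∈ Finset.Icc 1 9, v ≠ w → dj (Θ v) v (Θ w) w := by
  intro v hv w hw hvw
  have H : ∀ s < 3, ∀ t < 3, Θ v + s * (v + 1) ≠ Θ w + t * (w + 1) := by
    intro s hs t ht he
    have hbv := hb v hv
    have hs2 : s ≤ 2 := by omega
    have hsle : s * (v + 1) ≤ 2 * (v + 1) := Nat.mul_le_mul_right (v + 1) hs2
    have hlt : Θ v + s * (v + 1) < 3 * 9 := by omega
    have h1 : f ⟨Θ v + s * (v + 1), hlt⟩ = v := (hiff v hv _).mpr ⟨s, hs, rfl⟩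
    have h2 : f ⟨Θ v + s * (v + 1), hlt⟩ = w := (hiff w hw _).mpr ⟨t, ht, he⟩
    exact hvw (h1.symm.trans h2)
  refine ⟨?_, ?_, ?_, ?_, ?_, ?_, ?_, ?_, ?_⟩
  · simpa using H 0 (by omega) 0 (by omega)
  · simpa using H 0 (by omega) 1 (by omega)
  · simpa using H 0 (by omega) 2 (by omega)
  · simpa using H 1 (by omega) 0 (by omega)
  · simpa using H 1 (by omega) 1 (by omega)
  · simpa using H 1 (by omega) 2 (by omega)
  · simpa using H 2 (by omega) 0 (by omega)
  · simpa using H 2 (by omega) 1 (by omega)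
  · simpa using H 2 (by omega) 2 (by omega)

lemma eq_of_theta (f g : Fin (3 * 9) → ℕ) (Θ : ℕ → ℕ)
    (hrange : ∀ i, f i ∈ Finset.Icc 1 9)
    (hf : ∀ v ∈ Finset.Icc 1 9, ∀ i : Fin (3 * 9),
      f i = v ↔ ∃ t < 3, (i : ℕ) = Θ v + t * (v + 1))
    (hg : ∀ v ∈ Finset.Icc 1 9, ∀ i : Fin (3 * 9),
      g i = v ↔ ∃ t < 3, (i : ℕ) = Θ v + t * (v + 1)) :
    f = g :=
  funext fun i => ((hg (f i) (hrange i) i).mpr ((hf (f i) (hrange i) i).mp rfl)).symm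

lemma ne_fun (a b : Fin (3 * 9) → ℕ) (i : Fin (3 * 9)) (h : a i ≠ b i) : a ≠ b :=
  fun he => h (congrFun he i)

lemma iff1 : ∀ v ∈ Finset.Icc 1 9, ∀ i : Fin (3 * 9),
    langfordL1 i = v ↔ ∃ t < 3, (i : ℕ) = mkθ 0 6 18 15 7 3 8 5 1 v + t * (v + 1) := by
  decide

lemma iff2 : ∀ v ∈ Finset.Icc 1 9, ∀ i : Fin (3 * 9),
    langfordL2 i = v ↔ ∃ t < 3, (i : ℕ) = mkθ 0 3 16 7 13 8 10 5 1 v + t * (v + 1) := by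
  decide

lemma iff3 : ∀ v ∈ Finset.Icc 1 9, ∀ i : Fin (3 * 9),
    langfordL3 i = v ↔ ∃ t < 3, (i : ℕ) = mkθ 22 14 0 1 9 5 2 7 3 v + t * (v + 1) := by
  decide

lemma iff4 : ∀ v ∈ Finset.Icc 1 9, ∀ i : Fin (3 * 9),
    (fun i => langfordL1 i.rev) i = v ↔ ∃ t < 3, (i : ℕ) = mkθ 22 14 0 1 7 9 2 3 5 v + t * (v + 1) := by
  decide

lemma iff5 : ∀ v ∈ Finset.Icc 1 9, ∀ i : Fin (3 * 9),
    (fun i => langfordL2 i.rev) i = v ↔ ∃ t < 3, (i : ℕ) = mkθ 22 17 2 9 1 4 0 3 5 v + t * (v + 1) := by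
  decide

lemma iff6 : ∀ v ∈ Finset.Icc 1 9, ∀ i : Fin (3 * 9),
    (fun i => langfordL3 i.rev) i = v ↔ ∃ t < 3, (i : ℕ) = mkθ 0 6 18 15 5 7 8 1 3 v + t * (v + 1) := by
  decide

lemma isL1 : IsLangford 3 9 langfordL1 :=
  ⟨by decide, fun v hv => ⟨mkθ 0 6 18 15 7 3 8 5 1 v, iff1 v hv⟩⟩

lemma isL2 : IsLangford 3 9 langfordL2 :=
  ⟨by decide, fun v hv => ⟨mkθ 0 3 16 7 13 8 10 5 1 v, iff2 v hv⟩⟩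

lemma isL3 : IsLangford 3 9 langfordL3 :=
  ⟨by decide, fun v hv => ⟨mkθ 22 14 0 1 9 5 2 7 3 v, iff3 v hv⟩⟩

/-- There are exactly 3 Langford sequences of order 9 with multiplicity 3 up to
reversal: the three listed ones (every solution is one of them or a reversal of
one of them, they are Langford sequences, and the six sequences obtained from
them and their reversals are pairwise distinct). -/
theorem langford_triple_order_nine_classification :
    IsLangford 3 9 langfordL1 ∧ IsLangford 3 9 langfordL2 ∧ IsLangford 3 9 langfordL3 ∧
      ([langfordL1, langfordL2, langfordL3,
        (fun i => langfordL1 i.rev), (fun i => langfordL2 i.rev),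
        (fun i => langfordL3 i.rev)] : List (Fin (3 * 9) → ℕ)).Pairwise (· ≠ ·) ∧
      ∀ f : Fin (3 * 9) → ℕ, IsLangford 3 9 f →
        f = langfordL1 ∨ f = langfordL2 ∨ f = langfordL3 ∨
        f = (fun i => langfordL1 i.rev) ∨ f = (fun i => langfordL2 i.rev) ∨
        f = (fun i => langfordL3 i.rev) := by
  refine ⟨isL1, isL2, isL3, ?_, ?_⟩
  · -- pairwise distinctness
    refine List.Pairwise.cons ?_ (List.Pairwise.cons ?_ (List.Pairwise.cons ?_
      (List.Pairwise.cons ?_ (List.Pairwise.cons ?_ (List.Pairwise.cons ?_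
        List.Pairwise.nil))))) <;>
      (intro g hg; simp only [List.mem_cons, List.not_mem_nil, or_false] at hg)
    · rcases hg with (rfl|rfl|rfl|rfl|rfl)
      · exact ne_fun _ _ ⟨3, by norm_num⟩ (by decide)
      · exact ne_fun _ _ ⟨0, by norm_num⟩ (by decide)
      · exact ne_fun _ _ ⟨0, by norm_num⟩ (by decide)
      · exact ne_fun _ _ ⟨0, by norm_num⟩ (by decide)
      · exact ne_fun _ _ ⟨1, by norm_num⟩ (by decide)
    · rcases hg with (rfl|rfl|rfl|rfl)
      · exact ne_fun _ _ ⟨0, by norm_num⟩ (by decide)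
      · exact ne_fun _ _ ⟨0, by norm_num⟩ (by decide)
      · exact ne_fun _ _ ⟨0, by norm_num⟩ (by decide)
      · exact ne_fun _ _ ⟨1, by norm_num⟩ (by decide)
    · rcases hg with (rfl|rfl|rfl)
      · exact ne_fun _ _ ⟨3, by norm_num⟩ (by decide)
      · exact ne_fun _ _ ⟨0, by norm_num⟩ (by decide)
      · exact ne_fun _ _ ⟨0, by norm_num⟩ (by decide)
    · rcases hg with (rfl|rfl)
      · exact ne_fun _ _ ⟨0, by norm_num⟩ (by decide)
      · exact ne_fun _ _ ⟨0, by norm_num⟩ (by decide)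
    · rcases hg with (rfl)
      · exact ne_fun _ _ ⟨0, by norm_num⟩ (by decide)
  · intro f hf
    obtain ⟨hrange, hpos⟩ := hf
    obtain ⟨θ1, h1⟩ := hpos 1 (by decide)
    obtain ⟨θ2, h2⟩ := hpos 2 (by decide)
    obtain ⟨θ3, h3⟩ := hpos 3 (by decide)
    obtain ⟨θ4, h4⟩ := hpos 4 (by decide)
    obtain ⟨θ5, h5⟩ := hpos 5 (by decide)
    obtain ⟨θ6, h6⟩ := hpos 6 (by decide)
    obtain ⟨θ7, h7⟩ := hpos 7 (by decide)
    obtain ⟨θ8, h8⟩ := hpos 8 (by decide)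
    obtain ⟨θ9, h9⟩ := hpos 9 (by decide)
    have hiff : ∀ v ∈ Finset.Icc 1 9, ∀ i : Fin (3 * 9),
        f i = v ↔ ∃ t < 3, (i : ℕ) = mkθ θ1 θ2 θ3 θ4 θ5 θ6 θ7 θ8 θ9 v + t * (v + 1) := by
      intro v hv
      obtain ⟨hl, hr⟩ := Finset.mem_Icc.mp hv
      interval_cases v
      exacts [h1, h2, h3, h4, h5, h6, h7, h8, h9]
    have hb := theta_bound f (mkθ θ1 θ2 θ3 θ4 θ5 θ6 θ7 θ8 θ9) hrange hiff
    have hd := theta_dj f (mkθ θ1 θ2 θ3 θ4 θ5 θ6 θ7 θ8 θ9) hiff hb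
    have hb1 : θ1 + 2 * (1 + 1) ≤ 26 := hb 1 (by decide)
    have hb2 : θ2 + 2 * (2 + 1) ≤ 26 := hb 2 (by decide)
    have hb3 : θ3 + 2 * (3 + 1) ≤ 26 := hb 3 (by decide)
    have hb4 : θ4 + 2 * (4 + 1) ≤ 26 := hb 4 (by decide)
    have hb5 : θ5 + 2 * (5 + 1) ≤ 26 := hb 5 (by decide)
    have hb6 : θ6 + 2 * (6 + 1) ≤ 26 := hb 6 (by decide)
    have hb7 : θ7 + 2 * (7 + 1) ≤ 26 := hb 7 (by decide)
    have hb8 : θ8 + 2 * (8 + 1) ≤ 26 := hb 8 (by decide)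
    have hb9 : θ9 + 2 * (9 + 1) ≤ 26 := hb 9 (by decide)
    have hd12 : dj θ1 1 θ2 2 := hd 1 (by decide) 2 (by decide) (by omega)
    have hd13 : dj θ1 1 θ3 3 := hd 1 (by decide) 3 (by decide) (by omega)
    have hd14 : dj θ1 1 θ4 4 := hd 1 (by decide) 4 (by decide) (by omega)
    have hd15 : dj θ1 1 θ5 5 := hd 1 (by decide) 5 (by decide) (by omega)
    have hd16 : dj θ1 1 θ6 6 := hd 1 (by decide) 6 (by decide) (by omega)
    have hd17 : dj θ1 1 θ7 7 := hd 1 (by decide) 7 (by decide) (by omega)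
    have hd18 : dj θ1 1 θ8 8 := hd 1 (by decide) 8 (by decide) (by omega)
    have hd19 : dj θ1 1 θ9 9 := hd 1 (by decide) 9 (by decide) (by omega)
    have hd23 : dj θ2 2 θ3 3 := hd 2 (by decide) 3 (by decide) (by omega)
    have hd24 : dj θ2 2 θ4 4 := hd 2 (by decide) 4 (by decide) (by omega)
    have hd25 : dj θ2 2 θ5 5 := hd 2 (by decide) 5 (by decide) (by omega)
    have hd26 : dj θ2 2 θ6 6 := hd 2 (by decide) 6 (by decide) (by omega)
    have hd27 : dj θ2 2 θ7 7 := hd 2 (by decide) 7 (by decide) (by omega)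
    have hd28 : dj θ2 2 θ8 8 := hd 2 (by decide) 8 (by decide) (by omega)
    have hd29 : dj θ2 2 θ9 9 := hd 2 (by decide) 9 (by decide) (by omega)
    have hd34 : dj θ3 3 θ4 4 := hd 3 (by decide) 4 (by decide) (by omega)
    have hd35 : dj θ3 3 θ5 5 := hd 3 (by decide) 5 (by decide) (by omega)
    have hd36 : dj θ3 3 θ6 6 := hd 3 (by decide) 6 (by decide) (by omega)
    have hd37 : dj θ3 3 θ7 7 := hd 3 (by decide) 7 (by decide) (by omega)
    have hd38 : dj θ3 3 θ8 8 := hd 3 (by decide) 8 (by decide) (by omega)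
    have hd39 : dj θ3 3 θ9 9 := hd 3 (by decide) 9 (by decide) (by omega)
    have hd45 : dj θ4 4 θ5 5 := hd 4 (by decide) 5 (by decide) (by omega)
    have hd46 : dj θ4 4 θ6 6 := hd 4 (by decide) 6 (by decide) (by omega)
    have hd47 : dj θ4 4 θ7 7 := hd 4 (by decide) 7 (by decide) (by omega)
    have hd48 : dj θ4 4 θ8 8 := hd 4 (by decide) 8 (by decide) (by omega)
    have hd49 : dj θ4 4 θ9 9 := hd 4 (by decide) 9 (by decide) (by omega)
    have hd56 : dj θ5 5 θ6 6 := hd 5 (by decide) 6 (by decide) (by omega)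
    have hd57 : dj θ5 5 θ7 7 := hd 5 (by decide) 7 (by decide) (by omega)
    have hd58 : dj θ5 5 θ8 8 := hd 5 (by decide) 8 (by decide) (by omega)
    have hd59 : dj θ5 5 θ9 9 := hd 5 (by decide) 9 (by decide) (by omega)
    have hd67 : dj θ6 6 θ7 7 := hd 6 (by decide) 7 (by decide) (by omega)
    have hd68 : dj θ6 6 θ8 8 := hd 6 (by decide) 8 (by decide) (by omega)
    have hd69 : dj θ6 6 θ9 9 := hd 6 (by decide) 9 (by decide) (by omega)
    have hd78 : dj θ7 7 θ8 8 := hd 7 (by decide) 8 (by decide) (by omega)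
    have hd79 : dj θ7 7 θ9 9 := hd 7 (by decide) 9 (by decide) (by omega)
    have hd89 : dj θ8 8 θ9 9 := hd 8 (by decide) 9 (by decide) (by omega)
    have K := key
    unfold P9 P8 P7 P6 P5 P4 P3 P2 P1 P0 at K
    have KK := K θ9 (by omega : θ9 < 7) θ8 (by omega : θ8 < 9) hd89 θ7 (by omega : θ7 < 11) hd78 hd79 θ6 (by omega : θ6 < 13) hd67 hd68 hd69 θ5 (by omega : θ5 < 15) hd56 hd57 hd58 hd59 θ4 (by omega : θ4 < 17) hd45 hd46 hd47 hd48 hd49 θ3 (by omega : θ3 < 19) hd34 hd35 hd36 hd37 hd38 hd39 θ2 (by omega : θ2 < 21) hd23 hd24 hd25 hd26 hd27 hd28 hd29 θ1 (by omega : θ1 < 23) hd12 hd13 hd14 hd15 hd16 hd17 hd18 hd19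
    rcases KK with (⟨e1, e2, e3, e4, e5, e6, e7, e8, e9⟩ | ⟨e1, e2, e3, e4, e5, e6, e7, e8, e9⟩ | ⟨e1, e2, e3, e4, e5, e6, e7, e8, e9⟩ | ⟨e1, e2, e3, e4, e5, e6, e7, e8, e9⟩ | ⟨e1, e2, e3, e4, e5, e6, e7, e8, e9⟩ | ⟨e1, e2, e3, e4, e5, e6, e7, e8, e9⟩)
    · subst e1; subst e2; subst e3; subst e4; subst e5; subst e6; subst e7; subst e8; subst e9
      refine Or.inl ?_
      exact eq_of_theta f langfordL1 _ hrange hiff iff1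
    · subst e1; subst e2; subst e3; subst e4; subst e5; subst e6; subst e7; subst e8; subst e9
      refine Or.inr (Or.inl ?_)
      exact eq_of_theta f langfordL2 _ hrange hiff iff2
    · subst e1; subst e2; subst e3; subst e4; subst e5; subst e6; subst e7; subst e8; subst e9
      refine Or.inr (Or.inr (Or.inl ?_))
      exact eq_of_theta f langfordL3 _ hrange hiff iff3
    · subst e1; subst e2; subst e3; subst e4; subst e5; subst e6; subst e7; subst e8; subst e9
      refine Or.inr (Or.inr (Or.inr (Or.inl ?_)))
      exact eq_of_theta f (fun i => langfordL1 i.rev) _ hrange hiff iff4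
    · subst e1; subst e2; subst e3; subst e4; subst e5; subst e6; subst e7; subst e8; subst e9
      refine Or.inr (Or.inr (Or.inr (Or.inr (Or.inl ?_))))
      exact eq_of_theta f (fun i => langfordL2 i.rev) _ hrange hiff iff5
    · subst e1; subst e2; subst e3; subst e4; subst e5; subst e6; subst e7; subst e8; subst e9
      refine Or.inr (Or.inr (Or.inr (Or.inr (Or.inr ?_))))
      exact eq_of_theta f (fun i => langfordL3 i.rev) _ hrange hiff iff6
end
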